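/- Suppose U₁ and U₂ are unitaries on the same space and each Uⱼ is an (αⱼ, a, 0)-block-encoding of a matrix Aⱼ. Let c₁, c₂ ≥ 0 with c₁ + c₂ = 1, and let V be the two-qubit-controlled select unitary |0⟩⟨0| ⊗ U₁ + |1⟩⟨1| ⊗ U₂, conjugated by the state-preparation unitary W sending |0⟩ to √c₁|0⟩ + √c₂|1⟩ on the selector qubit. Then (W† ⊗ I) V (W ⊗ I) is a (1, a+1, 0)-block-encoding of c₁·A₁/α₁ + c₂·A₂/α₂. -/

import Mathlib

/-! Conjugating the select operator `∑ₖ |k⟩⟨k| ⊗ Uₖ` by `W ⊗ I` and reading off the `|0⟩` selector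
block gives `∑ₖ conj(W k 0) W k 0 · Uₖ`; on the ancilla-zero block each `Uₖ` is `Aₖ / αₖ`, and
`conj(√c) √c = c`. -/

open Matrix Kronecker

namespace Matrix

variable {κ ι R : Type*} [DecidableEq κ]

/-- The select operator `∑ₖ |k⟩⟨k| ⊗ U k`. -/
def selectMatrix [Zero R] (U : κ → Matrix ι ι R) : Matrix (κ × ι) (κ × ι) R :=
  of fun p q => if p.1 = q.1 then U p.1 p.2 q.2 else 0

theorem conjTranspose_kronecker_one_mul_selectMatrix_mul_kronecker_one_apply
    [Fintype κ] [Fintype ι] [DecidableEq ι] [CommSemiring R] [StarRing R]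
    (W : Matrix κ κ R) (U : κ → Matrix ι ι R)
    (k l : κ) (x y : ι) :
    ((Wᴴ ⊗ₖ (1 : Matrix ι ι R)) * selectMatrix U * (W ⊗ₖ (1 : Matrix ι ι R))) (k, x) (l, y)
      = ∑ m, star (W m k) * U m x y * W m l := by
  simp [selectMatrix, mul_apply, Fintype.sum_prod_type, one_apply]

theorem selectMatrix_fin_two [Zero R] (U₀ U₁ : Matrix ι ι R) :
    selectMatrix ![U₀, U₁] = of fun p q =>
      if p.1 = 0 ∧ q.1 = 0 then U₀ p.2 q.2
      else if p.1 = 1 ∧ q.1 = 1 then U₁ p.2 q.2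
      else 0 := by
  ext ⟨k, x⟩ ⟨l, y⟩
  fin_cases k <;> fin_cases l <;> simp [selectMatrix]

end Matrix

theorem Complex.star_ofReal_sqrt_mul_self {c : ℝ} (hc : 0 ≤ c) (z : ℂ) :
    star (Real.sqrt c : ℂ) * z * Real.sqrt c = c * z := by
  rw [Complex.star_def, Complex.conj_ofReal, mul_comm, ← mul_assoc, ← Complex.ofReal_mul,
    Real.mul_self_sqrt hc]

theorem lcu_block_encoding_general (a N : ℕ) (α₁ α₂ : ℝ)
    (U₁ U₂ : Matrix ((Fin a → Fin 2) × Fin N) ((Fin a → Fin 2) × Fin N) ℂ)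
    (A₁ A₂ : Matrix (Fin N) (Fin N) ℂ)
    (hBE₁ : ∀ i j, U₁ (fun _ => 0, i) (fun _ => 0, j) = A₁ i j / (α₁ : ℂ))
    (hBE₂ : ∀ i j, U₂ (fun _ => 0, i) (fun _ => 0, j) = A₂ i j / (α₂ : ℂ))
    (c₁ c₂ : ℝ) (hc₁ : 0 ≤ c₁) (hc₂ : 0 ≤ c₂)
    (W : Matrix (Fin 2) (Fin 2) ℂ)
    (hW0 : W 0 0 = (Real.sqrt c₁ : ℂ)) (hW1 : W 1 0 = (Real.sqrt c₂ : ℂ))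
    (V : Matrix (Fin 2 × ((Fin a → Fin 2) × Fin N))
      (Fin 2 × ((Fin a → Fin 2) × Fin N)) ℂ)
    (hV : V = Matrix.of fun p q =>
      if p.1 = 0 ∧ q.1 = 0 then U₁ p.2 q.2
      else if p.1 = 1 ∧ q.1 = 1 then U₂ p.2 q.2
      else 0) :
    ∀ i j : Fin N,
      ((Wᴴ ⊗ₖ (1 : Matrix ((Fin a → Fin 2) × Fin N) ((Fin a → Fin 2) × Fin N) ℂ))
          * V *
        (W ⊗ₖ (1 : Matrix ((Fin a → Fin 2) × Fin N) ((Fin a → Fin 2) × Fin N) ℂ)))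
          ((0 : Fin 2), (fun _ => 0, i)) ((0 : Fin 2), (fun _ => 0, j))
        = (c₁ : ℂ) * A₁ i j / (α₁ : ℂ) + (c₂ : ℂ) * A₂ i j / (α₂ : ℂ) := by
  intro i j
  rw [hV, ← selectMatrix_fin_two,
    conjTranspose_kronecker_one_mul_selectMatrix_mul_kronecker_one_apply, Fin.sum_univ_two]
  simp only [Matrix.cons_val_zero, Matrix.cons_val_one, hW0, hW1, hBE₁, hBE₂,
    Complex.star_ofReal_sqrt_mul_self hc₁, Complex.star_ofReal_sqrt_mul_self hc₂, mul_div_assoc]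

/-- Linear combination of unitaries: if `Uⱼ` is an `(αⱼ, a, 0)`-block-encoding
of `Aⱼ`, `c₁ + c₂ = 1` with `c₁, c₂ ≥ 0`, `V = |0⟩⟨0| ⊗ U₁ + |1⟩⟨1| ⊗ U₂` is the
select unitary, and `W` is unitary with `W|0⟩ = √c₁|0⟩ + √c₂|1⟩`, then
`(Wᴴ ⊗ I) V (W ⊗ I)` is a `(1, a+1, 0)`-block-encoding of
`c₁·A₁/α₁ + c₂·A₂/α₂`. -/
theorem lcu_block_encoding (a N : ℕ) (α₁ α₂ : ℝ) (hα₁ : 0 < α₁) (hα₂ : 0 < α₂)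
    (U₁ U₂ : Matrix ((Fin a → Fin 2) × Fin N) ((Fin a → Fin 2) × Fin N) ℂ)
    (hU₁ : U₁ᴴ * U₁ = 1) (hU₂ : U₂ᴴ * U₂ = 1)
    (A₁ A₂ : Matrix (Fin N) (Fin N) ℂ)
    (hBE₁ : ∀ i j, U₁ (fun _ => 0, i) (fun _ => 0, j) = A₁ i j / (α₁ : ℂ))
    (hBE₂ : ∀ i j, U₂ (fun _ => 0, i) (fun _ => 0, j) = A₂ i j / (α₂ : ℂ))
    (c₁ c₂ : ℝ) (hc₁ : 0 ≤ c₁) (hc₂ : 0 ≤ c₂) (hsum : c₁ + c₂ = 1)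
    (W : Matrix (Fin 2) (Fin 2) ℂ) (hW : Wᴴ * W = 1)
    (hW0 : W 0 0 = (Real.sqrt c₁ : ℂ)) (hW1 : W 1 0 = (Real.sqrt c₂ : ℂ))
    (V : Matrix (Fin 2 × ((Fin a → Fin 2) × Fin N))
      (Fin 2 × ((Fin a → Fin 2) × Fin N)) ℂ)
    (hV : V = Matrix.of fun p q =>
      if p.1 = 0 ∧ q.1 = 0 then U₁ p.2 q.2
      else if p.1 = 1 ∧ q.1 = 1 then U₂ p.2 q.2
      else 0) :
    ∀ i j : Fin N,
      ((Wᴴ ⊗ₖ (1 : Matrix ((Fin a → Fin 2) × Fin N) ((Fin a → Fin 2) × Fin N) ℂ))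
          * V *
        (W ⊗ₖ (1 : Matrix ((Fin a → Fin 2) × Fin N) ((Fin a → Fin 2) × Fin N) ℂ)))
          ((0 : Fin 2), (fun _ => 0, i)) ((0 : Fin 2), (fun _ => 0, j))
        = (c₁ : ℂ) * A₁ i j / (α₁ : ℂ) + (c₂ : ℂ) * A₂ i j / (α₂ : ℂ) :=
  lcu_block_encoding_general a N α₁ α₂ U₁ U₂ A₁ A₂ hBE₁ hBE₂ c₁ c₂ hc₁ hc₂ W hW0 hW1 V hV
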